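/- Let X and Y be complex Banach spaces, T ∈ L(X), C ∈ L(X,Y) surjective, B ∈ L(Y,X) injective, with T = BC, suppose T has a Moore-Penrose inverse T†, and let B† and C† denote the Moore-Penrose inverses of B and C. Then the following statements are equivalent: (i) T is EP; (ii) there exists a bijective U ∈ L(Y) such that C = UB†; (iii) there exists an injective U₁ ∈ L(Y) such that C = U₁B†; (iv) there exist U₂, U₃ ∈ L(Y) such that C = U₂B† and B† = U₃C; (v) there exists an injective S₁ ∈ L(Y) such that B† = S₁C. -/

import Mathlib

noncomputable section

open ContinuousLinearMap

/-- An operator `H` on a complex normed space is *hermitian* if `‖exp (i t H)‖ = 1`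
for all real `t`. -/
def IsHermitianOp {X : Type*} [NormedAddCommGroup X] [NormedSpace ℂ X]
    (H : X →L[ℂ] X) : Prop :=
  ∀ t : ℝ, ‖NormedSpace.exp ((Complex.I * (t : ℂ)) • H)‖ = 1

/-- `S` is a Moore–Penrose inverse of `T`: `TST = T`, `STS = S`, and `ST`, `TS` are hermitian. -/
def IsMPInv {X Y : Type*} [NormedAddCommGroup X] [NormedSpace ℂ X]
    [NormedAddCommGroup Y] [NormedSpace ℂ Y] (T : X →L[ℂ] Y) (S : Y →L[ℂ] X) : Prop :=
  T ∘L (S ∘L T) = T ∧ S ∘L (T ∘L S) = S ∧ IsHermitianOp (S ∘L T) ∧ IsHermitianOp (T ∘L S)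

/-!
`BB†` and `TT†` are hermitian idempotents with the range of `T`, and `C†C`, `T†T` are hermitian
idempotents with the kernel of `T`. Hermitian idempotents `P`, `Q` with `PQ = P` and `QP = Q`
coincide: `1 - 2P = exp (iπP)` has norm one, `(1 - 2P)(1 - 2Q) = 1 + 2(P - Q)` and
`(P - Q)² = 0`, so the powers `1 + 2n(P - Q)` stay bounded only if `P = Q`. Hence `T` is EP iff
`BB† = C†C`, and this follows from `ker C = ker B†`, which each of (ii)–(v) implies. Conversely,
if `BB† = C†C` then `CB` is invertible with inverse `B†C†`, `C = (CB)B†` and `B† = (B†C†)C`.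
-/

section NormedRing

variable {R : Type*} [NormedRing R] [NormedSpace ℝ R]

lemma eq_zero_of_mul_self_eq_zero_of_norm_one_add_le {h : R} (hh : h * h = 0)
    (hn : ‖1 + h‖ ≤ 1) : h = 0 := by
  have hpow : ∀ n : ℕ, (1 + h) ^ n = 1 + n • h := by
    intro n
    induction n with
    | zero => simp
    | succ n ih =>
      rw [pow_succ, ih, add_mul, one_mul, mul_add, mul_one, smul_mul_assoc, hh, smul_zero,
        add_zero, succ_nsmul]
      abel
  have hbound : ∀ n : ℕ, ((n + 1 : ℕ) : ℝ) * ‖h‖ ≤ 1 + ‖(1 : R)‖ := fun n =>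
    calc ((n + 1 : ℕ) : ℝ) * ‖h‖ = ‖(1 + h) ^ (n + 1) - 1‖ := by
          rw [hpow, add_sub_cancel_left, ← Nat.cast_smul_eq_nsmul ℝ, norm_smul, Real.norm_natCast]
      _ ≤ ‖(1 + h) ^ (n + 1)‖ + ‖(1 : R)‖ := norm_sub_le _ _
      _ ≤ 1 + ‖(1 : R)‖ := by
          gcongr
          exact (norm_pow_le' _ n.succ_pos).trans (pow_le_one₀ (norm_nonneg _) hn)
  by_contra hne
  obtain ⟨n, hn⟩ := exists_nat_gt ((1 + ‖(1 : R)‖) / ‖h‖)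
  have := hbound n
  rw [div_lt_iff₀ (norm_pos_iff.mpr hne)] at hn
  push_cast at this
  nlinarith [norm_nonneg h]

lemma eq_of_mul_eq_of_norm_one_sub_two_mul_le {p q : R} (hp : IsIdempotentElem p)
    (hq : IsIdempotentElem q) (hpq : p * q = p) (hqp : q * p = q)
    (hp₁ : ‖1 - 2 * p‖ ≤ 1) (hq₁ : ‖1 - 2 * q‖ ≤ 1) : p = q := by
  have hprod : (1 - 2 * p) * (1 - 2 * q) = 1 + 2 * (p - q) := by
    have : (1 - 2 * p) * (1 - 2 * q) = 1 - 2 * p - 2 * q + 4 * (p * q) := by noncomm_ring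
    rw [this, hpq]
    noncomm_ring
  have hsq : (2 * (p - q)) * (2 * (p - q)) = 0 := by
    have : (2 * (p - q)) * (2 * (p - q)) = 4 * (p * p - p * q - q * p + q * q) := by noncomm_ring
    rw [this, hp.eq, hq.eq, hpq, hqp, sub_self, zero_sub, neg_add_cancel, mul_zero]
  have hzero := eq_zero_of_mul_self_eq_zero_of_norm_one_add_le hsq <| by
    rw [← hprod]
    exact (norm_mul_le _ _).trans (mul_le_one₀ hp₁ (norm_nonneg _) hq₁)
  rw [two_mul, ← two_nsmul, ← Nat.cast_smul_eq_nsmul ℝ, smul_eq_zero] at hzero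
  exact sub_eq_zero.mp (hzero.resolve_left two_ne_zero)

lemma eq_of_mul_eq_of_norm_one_sub_two_mul_le' {p q : R} (hp : IsIdempotentElem p)
    (hq : IsIdempotentElem q) (hpq : p * q = q) (hqp : q * p = p)
    (hp₁ : ‖1 - 2 * p‖ ≤ 1) (hq₁ : ‖1 - 2 * q‖ ≤ 1) : p = q := by
  have hreflect : ∀ r : R, ‖1 - 2 * (1 - r)‖ = ‖1 - 2 * r‖ := fun r => by
    rw [← norm_neg]; congr 1; noncomm_ring
  refine sub_right_injective (eq_of_mul_eq_of_norm_one_sub_two_mul_le hp.one_sub hq.one_sub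
    ?_ ?_ ((hreflect p).trans_le hp₁) ((hreflect q).trans_le hq₁))
  · noncomm_ring; rw [hpq]; abel
  · noncomm_ring; rw [hqp]; abel

end NormedRing

lemma IsIdempotentElem.exp_smul {A : Type*} [NormedRing A] [NormedAlgebra ℂ A] {P : A}
    (hP : IsIdempotentElem P) (c : ℂ) :
    NormedSpace.exp (c • P) = 1 + (Complex.exp c - 1) • P := by
  have hscalar : HasSum (fun n : ℕ => ((n.factorial : ℂ)⁻¹ * c ^ n) • P) (Complex.exp c • P) := by
    rw [Complex.exp_eq_exp_ℂ]
    exact (NormedSpace.exp_series_hasSum_exp' (𝕂 := ℂ) c).smul_const P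
  -- Splitting off `1 - P` at `n = 0` turns the series into a scalar series times `P`,
  -- so no completeness of `A` is needed.
  have hterm : ∀ n : ℕ, (n.factorial⁻¹ : ℂ) • (c • P) ^ n
      = ((n.factorial : ℂ)⁻¹ * c ^ n) • P + (if n = 0 then 1 - P else 0) := by
    rintro (_ | n)
    · simp
    · rw [smul_pow, hP.pow_succ_eq, smul_smul, if_neg n.succ_ne_zero, add_zero]
  rw [NormedSpace.exp_eq_tsum ℂ]
  beta_reduce
  rw [((hscalar.add (hasSum_ite_eq 0 (1 - P))).congr_fun hterm).tsum_eq]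
  module

lemma IsHermitianOp.norm_one_sub_two_mul {X : Type*} [NormedAddCommGroup X] [NormedSpace ℂ X]
    {P : X →L[ℂ] X} (hH : IsHermitianOp P) (hP : IsIdempotentElem P) : ‖1 - 2 * P‖ = 1 := by
  have hπ := hH Real.pi
  have hcoeff : (-1 - 1 : ℂ) • P = -(2 * P) := by rw [two_mul, ← two_smul ℂ P]; norm_num
  rwa [hP.exp_smul, mul_comm, Complex.exp_pi_mul_I, hcoeff, ← sub_eq_add_neg] at hπ

section Operators

variable {X Y Z : Type*} [NormedAddCommGroup X] [NormedSpace ℂ X]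
  [NormedAddCommGroup Y] [NormedSpace ℂ Y] [NormedAddCommGroup Z] [NormedSpace ℂ Z]

namespace IsHermitianOp

variable {P Q : X →L[ℂ] X}

lemma eq_of_mul_eq (hP : IsHermitianOp P) (hQ : IsHermitianOp Q) (hPi : IsIdempotentElem P)
    (hQi : IsIdempotentElem Q) (hPQ : P * Q = P) (hQP : Q * P = Q) : P = Q :=
  eq_of_mul_eq_of_norm_one_sub_two_mul_le hPi hQi hPQ hQP
    (hP.norm_one_sub_two_mul hPi).le (hQ.norm_one_sub_two_mul hQi).le

lemma eq_of_mul_eq' (hP : IsHermitianOp P) (hQ : IsHermitianOp Q) (hPi : IsIdempotentElem P)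
    (hQi : IsIdempotentElem Q) (hPQ : P * Q = Q) (hQP : Q * P = P) : P = Q :=
  eq_of_mul_eq_of_norm_one_sub_two_mul_le' hPi hQi hPQ hQP
    (hP.norm_one_sub_two_mul hPi).le (hQ.norm_one_sub_two_mul hQi).le

end IsHermitianOp

namespace IsMPInv

variable {T : X →L[ℂ] Y} {S : Y →L[ℂ] X}

lemma isIdempotentElem_comp (h : IsMPInv T S) : IsIdempotentElem (S ∘L T) := by
  rw [IsIdempotentElem, mul_def, comp_assoc, h.1]

lemma isIdempotentElem_comp' (h : IsMPInv T S) : IsIdempotentElem (T ∘L S) := by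
  rw [IsIdempotentElem, mul_def, comp_assoc, h.2.1]

lemma comp_eq_id_of_injective (h : IsMPInv T S) (hT : Function.Injective T) :
    S ∘L T = .id ℂ X := by
  ext x
  exact hT congr($(h.1) x)

lemma comp_eq_id_of_surjective (h : IsMPInv T S) (hT : Function.Surjective T) :
    T ∘L S = .id ℂ Y := by
  ext y
  obtain ⟨x, rfl⟩ := hT y
  exact congr($(h.1) x)

lemma isHermitianOp_comp (h : IsMPInv T S) : IsHermitianOp (S ∘L T) := h.2.2.1

lemma isHermitianOp_comp' (h : IsMPInv T S) : IsHermitianOp (T ∘L S) := h.2.2.2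

end IsMPInv

namespace ContinuousLinearMap

lemma comp_comp_eq_of_ker_le {C : X →L[ℂ] Y} {Cd : Y →L[ℂ] X} {F : X →L[ℂ] Z}
    (hC : C ∘L (Cd ∘L C) = C) (h : (C : X →ₗ[ℂ] Y).ker ≤ (F : X →ₗ[ℂ] Z).ker) :
    F ∘L (Cd ∘L C) = F := by
  ext x
  have hx : Cd (C x) - x ∈ (C : X →ₗ[ℂ] Y).ker := by
    simpa [sub_eq_zero] using congr($hC x)
  exact sub_eq_zero.mp (by simpa using h hx)

lemma ker_comp_of_injective {U : Y →L[ℂ] Z} (hU : Function.Injective U) (F : X →L[ℂ] Y) :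
    ((U ∘L F : X →L[ℂ] Z) : X →ₗ[ℂ] Z).ker = (F : X →ₗ[ℂ] Y).ker := by
  rw [toLinearMap_comp, LinearMap.ker_comp_of_ker_eq_bot _ (LinearMap.ker_eq_bot_of_injective hU)]

end ContinuousLinearMap

variable {T : X →L[ℂ] X} {B : Y →L[ℂ] X} {C : X →L[ℂ] Y}
  {Td : X →L[ℂ] X} {Bd : X →L[ℂ] Y} {Cd : Y →L[ℂ] X}

lemma comp_mpInv_eq_of_eq_comp (hC : Function.Surjective C) (hB : Function.Injective B)
    (hT : T = B ∘L C) (hTd : IsMPInv T Td) (hBd : IsMPInv B Bd) (hCd : IsMPInv C Cd) :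
    T ∘L Td = B ∘L Bd := by
  have hBB (y : Y) : Bd (B y) = y := congr($(hBd.comp_eq_id_of_injective hB) y)
  have hTC : T ∘L Cd = B := by rw [hT, comp_assoc, hCd.comp_eq_id_of_surjective hC, comp_id]
  refine IsHermitianOp.eq_of_mul_eq' hTd.isHermitianOp_comp' hBd.isHermitianOp_comp'
    hTd.isIdempotentElem_comp' hBd.isIdempotentElem_comp' ?_ ?_
  · ext x
    rw [← hTC]
    exact congr($(hTd.1) (Cd (Bd x)))
  · ext x
    simp only [hT, mul_def, comp_apply, hBB]

lemma mpInv_comp_eq_of_eq_comp (hB : Function.Injective B) (hT : T = B ∘L C)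
    (hTd : IsMPInv T Td) (hBd : IsMPInv B Bd) (hCd : IsMPInv C Cd) :
    Td ∘L T = Cd ∘L C := by
  have hBT : Bd ∘L T = C := by rw [hT, ← comp_assoc, hBd.comp_eq_id_of_injective hB, id_comp]
  refine IsHermitianOp.eq_of_mul_eq hTd.isHermitianOp_comp hCd.isHermitianOp_comp
    hTd.isIdempotentElem_comp hCd.isIdempotentElem_comp ?_ ?_
  · ext x
    rw [hT]
    exact congr(Td (B ($(hCd.1) x)))
  · ext x
    rw [← hBT]
    exact congr(Cd (Bd ($(hTd.1) x)))

lemma isEP_iff_comp_mpInv_eq_mpInv_comp (hC : Function.Surjective C) (hB : Function.Injective B)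
    (hT : T = B ∘L C) (hTd : IsMPInv T Td) (hBd : IsMPInv B Bd) (hCd : IsMPInv C Cd) :
    T ∘L Td = Td ∘L T ↔ B ∘L Bd = Cd ∘L C := by
  rw [comp_mpInv_eq_of_eq_comp hC hB hT hTd hBd hCd, mpInv_comp_eq_of_eq_comp hB hT hTd hBd hCd]

lemma comp_mpInv_eq_mpInv_comp_of_ker_eq (hBd : IsMPInv B Bd) (hCd : IsMPInv C Cd)
    (h : (C : X →ₗ[ℂ] Y).ker = (Bd : X →ₗ[ℂ] Y).ker) : B ∘L Bd = Cd ∘L C :=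
  IsHermitianOp.eq_of_mul_eq hBd.isHermitianOp_comp' hCd.isHermitianOp_comp
    hBd.isIdempotentElem_comp' hCd.isIdempotentElem_comp
    (by rw [mul_def, comp_assoc, comp_comp_eq_of_ker_le hCd.1 h.le])
    (by rw [mul_def, comp_assoc, comp_comp_eq_of_ker_le hBd.2.1 h.ge])

lemma exists_equiv_of_comp_mpInv_eq_mpInv_comp (hBB : Bd ∘L B = .id ℂ Y)
    (hCC : C ∘L Cd = .id ℂ Y) (h : B ∘L Bd = Cd ∘L C) :
    ∃ U : Y ≃L[ℂ] Y, C = (U : Y →L[ℂ] Y) ∘L Bd ∧ Bd = (U.symm : Y →L[ℂ] Y) ∘L C := by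
  have hBB' (y : Y) : Bd (B y) = y := congr($hBB y)
  have hCC' (y : Y) : C (Cd y) = y := congr($hCC y)
  have h' (x : X) : B (Bd x) = Cd (C x) := congr($h x)
  refine ⟨.equivOfInverse' (C ∘L B) (Bd ∘L Cd) ?_ ?_, ?_, ?_⟩ <;> ext
  · simp [h', hCC']
  · simp [← h', hBB']
  · simp [h', hCC']
  · simp [← h', hBB']

end Operators

theorem ep_tfae_left_factor_general {X Y : Type*}
    [NormedAddCommGroup X] [NormedSpace ℂ X]
    [NormedAddCommGroup Y] [NormedSpace ℂ Y]
    (T : X →L[ℂ] X) (C : X →L[ℂ] Y) (B : Y →L[ℂ] X)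
    (hC : Function.Surjective C) (hB : Function.Injective B) (hT : T = B ∘L C)
    (Td : X →L[ℂ] X) (Bd : X →L[ℂ] Y) (Cd : Y →L[ℂ] X)
    (hTd : IsMPInv T Td) (hBd : IsMPInv B Bd) (hCd : IsMPInv C Cd) :
    List.TFAE
      [T ∘L Td = Td ∘L T,
       ∃ U : Y →L[ℂ] Y, Function.Bijective U ∧ C = U ∘L Bd,
       ∃ U₁ : Y →L[ℂ] Y, Function.Injective U₁ ∧ C = U₁ ∘L Bd,
       ∃ U₂ U₃ : Y →L[ℂ] Y, C = U₂ ∘L Bd ∧ Bd = U₃ ∘L C,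
       ∃ S₁ : Y →L[ℂ] Y, Function.Injective S₁ ∧ Bd = S₁ ∘L C] := by
  have hEP := isEP_iff_comp_mpInv_eq_mpInv_comp hC hB hT hTd hBd hCd
  have of_ker_eq (h : (C : X →ₗ[ℂ] Y).ker = (Bd : X →ₗ[ℂ] Y).ker) : T ∘L Td = Td ∘L T :=
    hEP.2 (comp_mpInv_eq_mpInv_comp_of_ker_eq hBd hCd h)
  have exists_equiv (h : T ∘L Td = Td ∘L T) :
      ∃ U : Y ≃L[ℂ] Y, C = (U : Y →L[ℂ] Y) ∘L Bd ∧ Bd = (U.symm : Y →L[ℂ] Y) ∘L C :=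
    exists_equiv_of_comp_mpInv_eq_mpInv_comp (hBd.comp_eq_id_of_injective hB)
      (hCd.comp_eq_id_of_surjective hC) (hEP.1 h)
  tfae_have 1 → 2 := fun h => let ⟨U, hCU, _⟩ := exists_equiv h; ⟨U, U.bijective, hCU⟩
  tfae_have 2 → 3 := fun ⟨U, hU, hCU⟩ => ⟨U, hU.injective, hCU⟩
  tfae_have 3 → 1 := fun ⟨U, hU, hCU⟩ => of_ker_eq (hCU ▸ ker_comp_of_injective hU Bd)
  tfae_have 1 → 4 := fun h => let ⟨U, hCU, hBU⟩ := exists_equiv h; ⟨U, U.symm, hCU, hBU⟩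
  tfae_have 4 → 1 := fun ⟨U₂, U₃, hC₂, hB₃⟩ => of_ker_eq <| le_antisymm
    (hB₃ ▸ LinearMap.ker_le_ker_comp (C : X →ₗ[ℂ] Y) (U₃ : Y →ₗ[ℂ] Y))
    (hC₂ ▸ LinearMap.ker_le_ker_comp (Bd : X →ₗ[ℂ] Y) (U₂ : Y →ₗ[ℂ] Y))
  tfae_have 1 → 5 := fun h =>
    let ⟨U, _, hBU⟩ := exists_equiv h; ⟨U.symm, U.symm.injective, hBU⟩
  tfae_have 5 → 1 := fun ⟨S, hS, hBS⟩ => of_ker_eq (hBS ▸ ker_comp_of_injective hS C).symm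
  tfae_finish

/-- For `T = BC` with `C` surjective, `B` injective, and Moore–Penrose inverses `T†`, `B†`,
`C†`: `T` is EP iff `C = UB†` for a bijective `U`, iff `C = U₁B†` for an injective `U₁`,
iff `C = U₂B†` and `B† = U₃C` for some `U₂, U₃`, iff `B† = S₁C` for an injective `S₁`. -/
theorem ep_tfae_left_factor {X Y : Type*}
    [NormedAddCommGroup X] [NormedSpace ℂ X] [CompleteSpace X]
    [NormedAddCommGroup Y] [NormedSpace ℂ Y] [CompleteSpace Y]
    (T : X →L[ℂ] X) (C : X →L[ℂ] Y) (B : Y →L[ℂ] X)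
    (hC : Function.Surjective C) (hB : Function.Injective B) (hT : T = B ∘L C)
    (Td : X →L[ℂ] X) (Bd : X →L[ℂ] Y) (Cd : Y →L[ℂ] X)
    (hTd : IsMPInv T Td) (hBd : IsMPInv B Bd) (hCd : IsMPInv C Cd) :
    List.TFAE
      [T ∘L Td = Td ∘L T,
       ∃ U : Y →L[ℂ] Y, Function.Bijective U ∧ C = U ∘L Bd,
       ∃ U₁ : Y →L[ℂ] Y, Function.Injective U₁ ∧ C = U₁ ∘L Bd,
       ∃ U₂ U₃ : Y →L[ℂ] Y, C = U₂ ∘L Bd ∧ Bd = U₃ ∘L C,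
       ∃ S₁ : Y →L[ℂ] Y, Function.Injective S₁ ∧ Bd = S₁ ∘L C] :=
  ep_tfae_left_factor_general T C B hC hB hT Td Bd Cd hTd hBd hCd
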